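/- arXiv:1511.09194 — 5 statements merged into one kernel-verified Lean document; each statement's English description precedes it below -/
import Mathlib

section
/- Let T be a self-similar interval exchange map with primitive associated substitution σ and matrix M, let β be an eigenvalue of M with |β| > 1 such that β/|β| is not a root of unity, and let γ be an eigenvector of M for β. Then there exists a minimal sequence for γ, i.e. a sequence ω ∈ Ω_σ with Re(γ_n(ω)) ≥ 0 for all n ∈ ℤ. -/
open Complex MeasureTheory Filter Set
open scoped BigOperators

noncomputable section

namespace IEMWandering

/-- The half-open unit interval `[0,1)`. -/
def unitIvl : Set ℝ := Set.Ico (0:ℝ) 1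

/-- An interval exchange map on `[0,1)`: a bijection of `[0,1)` that is a translation
on each member of a finite partition of `[0,1)` into half-open intervals. -/
structure IEM (A : Type) [Fintype A] where
  T : ℝ → ℝ
  I : A → Set ℝ
  δ : A → ℝ
  isIco : ∀ a, ∃ l u : ℝ, l < u ∧ I a = Set.Ico l u
  subset_unit : ∀ a, I a ⊆ unitIvl
  partition : ∀ t ∈ unitIvl, ∃! a, t ∈ I a
  translate : ∀ a, ∀ t ∈ I a, T t = t + δ a
  bijOn : Set.BijOn T unitIvl unitIvl

/-- `substIter σ n a = σⁿ(a)`. -/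
def substIter {A : Type} (σ : A → List A) : ℕ → A → List A
  | 0, a => [a]
  | n+1, a => ((σ a).map (substIter σ n)).flatten

/-- Applying a substitution to a word. -/
def substW {A : Type} (σ : A → List A) (w : List A) : List A := (w.map σ).flatten

/-- `substIterW σ k w = σᵏ(w)`. -/
def substIterW {A : Type} (σ : A → List A) (k : ℕ) (w : List A) : List A :=
  (substW σ)^[k] w

/-- A substitution is primitive if some power of it maps every letter to a word
containing every letter. -/
def Primitive {A : Type} (σ : A → List A) : Prop :=
  ∃ n : ℕ, ∀ a b : A, a ∈ substIter σ n b

/-- The matrix `M` of a substitution: `M a b` = number of occurrences of `b` in `σ a`. -/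
def substMatrix {A : Type} [Fintype A] [DecidableEq A] (σ : A → List A) :
    Matrix A A ℂ := fun a b => ((σ a).count b : ℂ)

/-- `γ(w) = γ_{w_0} + … + γ_{w_{n-1}}`. -/
def wordSum {A : Type} (γ : A → ℂ) (w : List A) : ℂ := (w.map γ).sum

/-- `γ` is an eigenvector of the substitution matrix for the eigenvalue `β`. -/
def IsEigenvector {A : Type} [Fintype A] [DecidableEq A] (σ : A → List A) (β : ℂ)
    (γ : A → ℂ) : Prop :=
  γ ≠ 0 ∧ (substMatrix σ).mulVec γ = β • γ

/-- `z` is not a root of unity. -/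
def NotRootOfUnity (z : ℂ) : Prop := ∀ n : ℕ, 0 < n → z ^ n ≠ 1

/-- `β/|β|`. -/
def unitDir (β : ℂ) : ℂ := β / (‖β‖ : ℂ)

/-- A self-similar interval exchange map, together with its renormalization ratio `α`
and its associated substitution `σ`: the first-return map of `T` to `[0,α)`, rescaled
by `α⁻¹`, equals `T`; `(σ a).length` is the first return time `r_a` of `α I_a` to
`[0,α)` and `T^[m] (α I_a) ⊆ I_{(σ a)_m}` for `m < r_a`. -/
structure SelfSimilarIEM (A : Type) [Fintype A] extends IEM A where
  α : ℝ
  α_pos : 0 < α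
  α_lt_one : α < 1
  σ : A → List A
  σ_ne : ∀ a, σ a ≠ []
  visits : ∀ a, ∀ t ∈ I a, ∀ (m : ℕ) (h : m < (σ a).length),
    T^[m] (α * t) ∈ I ((σ a).get ⟨m, h⟩)
  not_first_return : ∀ a, ∀ t ∈ I a, ∀ k : ℕ, 0 < k → k < (σ a).length →
    T^[k] (α * t) ∉ Set.Ico (0:ℝ) α
  self_similar : ∀ a, ∀ t ∈ I a, T^[(σ a).length] (α * t) = α * T t

/-- An affine interval exchange map on `[0,1)` with positive slopes. -/
structure AffineIEM (A : Type) [Fintype A] where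
  f : ℝ → ℝ
  J : A → Set ℝ
  slope : A → ℝ
  intercept : A → ℝ
  slope_pos : ∀ a, 0 < slope a
  isIco : ∀ a, ∃ l u : ℝ, l < u ∧ J a = Set.Ico l u
  subset_unit : ∀ a, J a ⊆ unitIvl
  partition : ∀ t ∈ unitIvl, ∃! a, t ∈ J a
  affine : ∀ a, ∀ t ∈ J a, f t = slope a * t + intercept a
  bijOn : Set.BijOn f unitIvl unitIvl

/-- `h` realizes a semi-conjugacy from `f` to `T`:
it is continuous, surjective, nondecreasing and `h ∘ f = T ∘ h` on `[0,1)`. -/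
def SemiConjWith (T f h : ℝ → ℝ) : Prop :=
  ContinuousOn h unitIvl ∧ Set.SurjOn h unitIvl unitIvl ∧ MonotoneOn h unitIvl ∧
    Set.MapsTo h unitIvl unitIvl ∧ ∀ t ∈ unitIvl, h (f t) = T (h t)

/-- `f` is semi-conjugate with `T`. -/
def SemiConjugate (T f : ℝ → ℝ) : Prop := ∃ h, SemiConjWith T f h

/-- `f` has a wandering interval: a nondegenerate interval whose forward iterates
are pairwise disjoint. -/
def HasWanderingInterval (f : ℝ → ℝ) : Prop :=
  ∃ u v : ℝ, u < v ∧ Set.Ico u v ⊆ unitIvl ∧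
    ∀ m n : ℕ, m ≠ n → Disjoint (f^[m] '' Set.Ico u v) (f^[n] '' Set.Ico u v)

/-- Membership in the substitution subshift `Ω_σ`: every finite subword of `ω`
occurs in some `σⁿ(a)`. -/
def InOmega {A : Type} (σ : A → List A) (ω : ℤ → A) : Prop :=
  ∀ (m : ℤ) (len : ℕ), ∃ (n : ℕ) (a : A),
    (List.ofFn fun i : Fin len => ω (m + (i.val : ℤ))) <:+: substIter σ n a

/-- The word `ω_n … ω_m`. -/
def segment {A : Type} (ω : ℤ → A) (n m : ℤ) : List A :=
  List.ofFn fun i : Fin (m - n + 1).toNat => ω (n + (i.val : ℤ))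

/-- `γ_n(ω)`: the Birkhoff-like sums of `γ` along `ω`. -/
def gammaZ {A : Type} (γ : A → ℂ) (ω : ℤ → A) (n : ℤ) : ℂ :=
  if 0 ≤ n then ∑ i ∈ Finset.range n.toNat, γ (ω (i : ℤ))
  else -∑ i ∈ Finset.range (-n).toNat, γ (ω (n + (i : ℤ)))

/-- `ω` is a minimal sequence for `γ`. -/
def MinimalSeq {A : Type} (σ : A → List A) (γ : A → ℂ) (ω : ℤ → A) : Prop :=
  InOmega σ ω ∧ ∀ n : ℤ, 0 ≤ (gammaZ γ ω n).re

/-- Triples `(p, c, s)` of a prefix, a central letter and a suffix. -/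
abbrev Triple (A : Type) := List A × A × List A

/-- The set `𝒮_a` of reversed prefix-suffix expansions at `a` (indexed from `0`,
so `x m` is the triple `(p_{m+1}, c_{m+1}, s_{m+1})`). -/
def InS {A : Type} (σ : A → List A) (a : A) (x : ℕ → Triple A) : Prop :=
  σ a = (x 0).1 ++ (x 0).2.1 :: (x 0).2.2 ∧
  ∀ m : ℕ, σ ((x m).2.1) = (x (m+1)).1 ++ (x (m+1)).2.1 :: (x (m+1)).2.2

/-- `z_a(x) = Σ_{m≥1} β^{-m} γ(p_m)`. -/
def zrep {A : Type} (β : ℂ) (γ : A → ℂ) (x : ℕ → Triple A) : ℂ :=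
  ∑' m : ℕ, β⁻¹ ^ (m + 1) * wordSum γ (x m).1

/-- `z_a^{(n)}(x) = Σ_{m=1}^n β^{-m} γ(p_m)`. -/
def zrepN {A : Type} (β : ℂ) (γ : A → ℂ) (n : ℕ) (x : ℕ → Triple A) : ℂ :=
  ∑ m ∈ Finset.range n, β⁻¹ ^ (m + 1) * wordSum γ (x m).1

/-- The fractal `𝔉_a`. -/
def Frac {A : Type} (σ : A → List A) (β : ℂ) (γ : A → ℂ) (a : A) : Set ℂ :=
  { z | ∃ x, InS σ a x ∧ zrep β γ x = z }

/-- The finite approximation `𝔉_a^{(n)}`. -/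
def FracN {A : Type} (σ : A → List A) (β : ℂ) (γ : A → ℂ) (n : ℕ) (a : A) : Set ℂ :=
  { z | ∃ x, InS σ a x ∧ zrepN β γ n x = z }

/-- `v_a(τ) = min_{z ∈ 𝔉_a} Re(τ z)`. -/
def vDir {A : Type} (σ : A → List A) (β : ℂ) (γ : A → ℂ) (a : A) (τ : ℂ) : ℝ :=
  sInf ((fun z => (τ * z).re) '' Frac σ β γ a)

/-- `v_a^{(n)}(τ) = min_{z ∈ 𝔉_a^{(n)}} Re(τ z)`. -/
def vDirN {A : Type} (σ : A → List A) (β : ℂ) (γ : A → ℂ) (n : ℕ) (a : A) (τ : ℂ) : ℝ :=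
  sInf ((fun z => (τ * z).re) '' FracN σ β γ n a)

/-- The set `E_a(τ)` of extreme points of `𝔉_a` in direction `τ`. -/
def ExtPts {A : Type} (σ : A → List A) (β : ℂ) (γ : A → ℂ) (a : A) (τ : ℂ) : Set ℂ :=
  { z ∈ Frac σ β γ a | (τ * z).re = vDir σ β γ a τ }

/-- The set `E_a^{(n)}(τ)`. -/
def ExtPtsN {A : Type} (σ : A → List A) (β : ℂ) (γ : A → ℂ) (n : ℕ) (a : A) (τ : ℂ) : Set ℂ :=
  { z ∈ FracN σ β γ n a | (τ * z).re = vDirN σ β γ n a τ }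

/-- The unique representation property: every extreme point of every fractal `𝔉_a`
has a unique representation in `𝒮_a`. -/
def URP {A : Type} (σ : A → List A) (β : ℂ) (γ : A → ℂ) : Prop :=
  ∀ (a : A) (τ : ℂ), ‖τ‖ = 1 →
    ∀ z ∈ ExtPts σ β γ a τ, ∀ x y : ℕ → Triple A,
      InS σ a x → zrep β γ x = z → InS σ a y → zrep β γ y = z → x = y

/-- `(p,c,s)` is a decomposition of `σ(a)`. -/
def IsDecomp {A : Type} (σ : A → List A) (a : A) (d : Triple A) : Prop :=
  σ a = d.1 ++ d.2.1 :: d.2.2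

/-- The subfractal `𝔉_{a,(p,c,s)}`: values of representations starting with `(p,c,s)`. -/
def FracDec {A : Type} (σ : A → List A) (β : ℂ) (γ : A → ℂ) (a : A) (d : Triple A) :
    Set ℂ := { z | ∃ x, InS σ a x ∧ x 0 = d ∧ zrep β γ x = z }

/-- `v_{a,(p,c,s)}(τ)`. -/
def vDec {A : Type} (σ : A → List A) (β : ℂ) (γ : A → ℂ) (a : A) (d : Triple A)
    (τ : ℂ) : ℝ := sInf ((fun z => (τ * z).re) '' FracDec σ β γ a d)

/-- `E_{a,(p,c,s)}(τ) = E_a(τ) ∩ 𝔉_{a,(p,c,s)}`. -/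
def EDec {A : Type} (σ : A → List A) (β : ℂ) (γ : A → ℂ) (a : A) (d : Triple A)
    (τ : ℂ) : Set ℂ := ExtPts σ β γ a τ ∩ FracDec σ β γ a d

/-- The set `Ψ_a` of directions with extreme points in two distinct subfractals. -/
def Psi {A : Type} (σ : A → List A) (β : ℂ) (γ : A → ℂ) (a : A) : Set ℂ :=
  { τ | ‖τ‖ = 1 ∧ ∃ d d' : Triple A, d ≠ d' ∧
      IsDecomp σ a d ∧ IsDecomp σ a d' ∧
      EDec σ β γ a d τ ≠ EDec σ β γ a d' τ ∧
      vDir σ β γ a τ = vDec σ β γ a d τ ∧ vDir σ β γ a τ = vDec σ β γ a d' τ }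

/-- The natural (arc) distance between two points of the unit circle. -/
def arcDist (τ τ' : ℂ) : ℝ := |Complex.arg (τ / τ')|

/-- A good eigenvector: directions in `Ψ(γ)` are badly approximated by the
orbit of `β₀ = β/|β|`. -/
def GoodEigenvector {A : Type} [Fintype A] [DecidableEq A] (σ : A → List A) (β : ℂ)
    (γ : A → ℂ) : Prop :=
  ∀ C : ℝ, 1 < C → ∀ τ ∈ ⋃ a : A, Psi σ β γ a,
    0 < Filter.liminf
      (fun n : ℕ => ((C ^ n * arcDist τ ((unitDir β) ^ n) : ℝ) : EReal)) Filter.atTop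

/-- The left shift on sequences of triples. -/
def shiftS {A : Type} (x : ℕ → Triple A) : ℕ → Triple A := fun m => x (m + 1)

/-- The set `E_a^*(τ)` of limit extreme points. -/
def LimitExt {A : Type} (σ : A → List A) (β : ℂ) (γ : A → ℂ) (a : A) (τ : ℂ) :
    Set ℂ :=
  { z | z ∈ ExtPts σ β γ a τ ∧ ∃ x, InS σ a x ∧ zrep β γ x = z ∧
      ∀ j : ℕ, 0 < j → ∃ (aj : A) (y : ℕ → Triple A), InS σ aj y ∧
        zrep β γ y ∈ ExtPts σ β γ aj ((unitDir β) ^ j * τ) ∧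
        (y (j - 1)).2.1 = a ∧ (fun m => y (m + j)) = x }

/-- Minimality of an i.e.m.: every (forward) orbit is dense in `[0,1)`. -/
def MinimalIEM {A : Type} [Fintype A] (T : IEM A) : Prop :=
  ∀ t ∈ unitIvl, ∀ s ∈ unitIvl, ∀ ε : ℝ, 0 < ε → ∃ n : ℕ, |T.T^[n] t - s| < ε

/-- `ω` is the itinerary of a full (two-sided) orbit of `T`. -/
def IsItinerary {A : Type} [Fintype A] (T : IEM A) (ω : ℤ → A) : Prop :=
  ∃ o : ℤ → ℝ, (∀ n, o n ∈ unitIvl) ∧ (∀ n, T.T (o n) = o (n + 1)) ∧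
    ∀ n, o n ∈ T.I (ω n)

/-- Membership in `Ω_T`, the closure (in the product topology) of the set of
itineraries of points of `[0,1)` under `T`. -/
def InOmegaT {A : Type} [Fintype A] (T : IEM A) (ω : ℤ → A) : Prop :=
  ∀ N : ℕ, ∃ ω', IsItinerary T ω' ∧ ∀ n : ℤ, |n| ≤ (N : ℤ) → ω' n = ω n

/-- The orientation-preserving exchange of the two halves of `[t₀, t₁)`. -/
def halfExchange (t₀ t₁ t : ℝ) : ℝ :=
  if t₀ ≤ t ∧ t < (t₀ + t₁) / 2 then t + (t₁ - t₀) / 2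
  else if (t₀ + t₁) / 2 ≤ t ∧ t < t₁ then t - (t₁ - t₀) / 2
  else t

/-- The cubic Arnoux–Yoccoz interval exchange map. -/
def AYmap (α : ℝ) : ℝ → ℝ := fun t =>
  halfExchange 0 1 (halfExchange 0 α (halfExchange α (α + α^2)
    (halfExchange (α + α^2) 1 t)))

/-- The cubic Arnoux–Yoccoz substitution on `{1, …, 9}` (letters `0`-indexed):
`σ(1)=35, σ(2)=45, σ(3)=46, σ(4)=17, σ(5)=18, σ(6)=19, σ(7)=29, σ(8)=2, σ(9)=3`. -/
def AYsub : Fin 9 → List (Fin 9) :=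
  ![[2,4],[3,4],[3,5],[0,6],[0,7],[0,8],[1,8],[1],[2]]

/-- The eigenvector of the Arnoux–Yoccoz matrix for the eigenvalue `β`. -/
def AYvec (β : ℂ) : Fin 9 → ℂ :=
  ![β^2+β+1, -β, -β, -β^2-β-1, β+1, β+1, -β^2-β-2, -1, -1]

end IEMWandering

/-!
Pick a letter `a₀` with `γ a₀ ≠ 0`. Since `β` is not real, some prefix `q` of some `σʲ(a₀)` has
`γ(q)` not a real multiple of `γ(σʲ(a₀)) = βʲ γ(a₀)`. The powers of `β/|β|` are dense on the
circle and recur near any point, so for suitable large `m` the word `σᵐ⁺ʲ(a₀)` has `Re γ > 0`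
while its prefix `σᵐ(q)` has `Re γ = Re (βᵐ γ(q))` below any prescribed bound. Since `Re γ`
changes by a bounded amount per letter, the prefix of `σᵐ⁺ʲ(a₀)` minimising `Re γ` ends
arbitrarily far from both ends of the word; recentred at that position, the word has
`Re γ_n ≥ 0` on a long window around `0`. A limit point of these recentred words in `A^ℤ` is a
minimal sequence.
-/

theorem Circle.mapClusterPt_atTop_pow_of_not_isOfFinOrder {z : Circle} (hz : ¬IsOfFinOrder z)
    (u : Circle) : MapClusterPt u atTop (z ^ · : ℕ → Circle) := by
  have : Fact ((0 : ℝ) < 1) := ⟨one_pos⟩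
  let e := AddCircle.homeomorphCircle (one_ne_zero' ℝ)
  obtain ⟨a, rfl⟩ := e.surjective z
  have he : ∀ x, e x = AddCircle.toCircle x := AddCircle.homeomorphCircle_apply _
  have ha : addOrderOf a = 0 := by
    refine addOrderOf_eq_zero_iff'.2 fun n hn hna => hz ?_
    refine isOfFinOrder_iff_pow_eq_one.2 ⟨n, hn, ?_⟩
    rw [he, ← AddCircle.toCircle_nsmul, hna, AddCircle.toCircle_zero]
  have hdense : DenseRange (e a ^ · : ℤ → Circle) := by
    convert e.surjective.denseRange.comp (AddCircle.denseRange_zsmul_iff.2 ha) e.continuous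
      using 1
    ext m
    simp [he, AddCircle.toCircle_zsmul]
  exact ((mapClusterPt_atTop_pow_tfae u (e a)).out 0 3).2 (hdense u)

namespace IEMWandering

open Topology

variable {A : Type}

lemma exists_min_far_from_ends {f : ℕ → ℝ} {G : ℝ} (hf : ∀ k, |f (k + 1) - f k| ≤ G)
    {N L k₀ : ℕ} (h0 : 0 ≤ f 0) (hL : 0 ≤ f L) (hk₀ : k₀ ≤ L) (hfk₀ : f k₀ < -(N * G)) :
    ∃ p, N < p ∧ p + N < L ∧ ∀ k ≤ L, f p ≤ f k := by
  have hG : 0 ≤ G := (abs_nonneg _).trans (hf 0)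
  have hlip : ∀ j d, |f (j + d) - f j| ≤ d * G := by
    intro j d
    induction d with
    | zero => simp
    | succ d ih =>
      calc |f (j + (d + 1)) - f j| ≤ |f (j + d + 1) - f (j + d)| + |f (j + d) - f j| :=
            abs_sub_le _ _ _
        _ ≤ (d + 1 : ℕ) * G := by push_cast; linarith [hf (j + d)]
  obtain ⟨p, hp, hpmin⟩ := Finset.exists_min_image (Finset.range (L + 1)) f ⟨0, by simp⟩
  have hpL : p ≤ L := Nat.lt_succ_iff.1 (Finset.mem_range.1 hp)
  have hmin : ∀ k ≤ L, f p ≤ f k := fun k hk => hpmin k (Finset.mem_range.2 (by omega))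
  have hpk₀ := hmin k₀ hk₀
  refine ⟨p, ?_, ?_, hmin⟩
  · by_contra! hpN
    have hleft := (abs_le.1 (hlip 0 p)).1
    rw [zero_add] at hleft
    have : (p : ℝ) * G ≤ N * G := by gcongr
    linarith
  · by_contra! hpN
    obtain ⟨d, rfl⟩ := Nat.exists_eq_add_of_le hpL
    have := (abs_le.1 (hlip p d)).2
    have : (d : ℝ) * G ≤ N * G := by gcongr; omega
    linarith

lemma exists_frequently_forall_eq {ι B : Type*} [Finite B] (s : ℕ → ι → B) :
    ∃ ω : ι → B, ∀ F : Finset ι, ∃ᶠ N in atTop, ∀ i ∈ F, s N i = ω i := by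
  let _ : TopologicalSpace B := ⊥
  have : DiscreteTopology B := ⟨rfl⟩
  obtain ⟨ω, hω⟩ : ∃ ω, MapClusterPt ω atTop s := exists_clusterPt_of_compactSpace _
  refine ⟨ω, fun F => hω.frequently (p := fun f => ∀ i ∈ F, f i = ω i) ?_⟩
  exact (eventually_all_finset F).2 fun i _ =>
    (continuous_apply i).continuousAt.preimage_mem_nhds ((isOpen_discrete {ω i}).mem_nhds rfl)

lemma wordSum_append (γ : A → ℂ) (u v : List A) :
    wordSum γ (u ++ v) = wordSum γ u + wordSum γ v := by
  simp [wordSum]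

lemma wordSum_flatten_map {γ : A → ℂ} {f : A → List A} {k : ℂ}
    (hf : ∀ c, wordSum γ (f c) = k * γ c) (l : List A) :
    wordSum γ ((l.map f).flatten) = k * wordSum γ l := by
  induction l with
  | nil => simp [wordSum]
  | cons c l ih =>
    rw [List.map_cons, List.flatten_cons, wordSum_append, ih, hf]
    simp [wordSum, mul_add]

lemma substIter_add (σ : A → List A) (m j : ℕ) (a : A) :
    substIter σ (m + j) a = ((substIter σ j a).map (substIter σ m)).flatten := by
  induction j generalizing a with
  | zero => simp [substIter]
  | succ j ih =>
    rw [← add_assoc, substIter, substIter, funext ih]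
    simp only [List.map_flatten, List.flatten_flatten, List.map_map, Function.comp_def]

lemma norm_wordSum_take_succ_sub_le [Fintype A] (γ : A → ℂ) (l : List A) (k : ℕ) :
    ‖wordSum γ (l.take (k + 1)) - wordSum γ (l.take k)‖ ≤ ∑ b, ‖γ b‖ := by
  rw [List.take_add_one, wordSum_append, add_sub_cancel_left]
  cases l[k]? with
  | none => simp [wordSum, Finset.sum_nonneg]
  | some c =>
    simpa [wordSum] using Finset.single_le_sum (fun b _ => norm_nonneg (γ b)) (Finset.mem_univ c)

lemma sum_range_getD_eq_wordSum_take (γ : A → ℂ) (l : List A) (d : A) {k : ℕ}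
    (hk : k ≤ l.length) : ∑ i ∈ Finset.range k, γ (l.getD i d) = wordSum γ (l.take k) := by
  induction k with
  | zero => simp [wordSum]
  | succ k ih =>
    rw [Finset.sum_range_succ, ih (by omega), List.take_add_one, wordSum_append,
      List.getElem?_eq_getElem (by omega), List.getD_eq_getElem _ _ (by omega)]
    simp [wordSum]

lemma ofFn_getD_isInfix (l : List A) (d : A) {j len : ℕ} (h : j + len ≤ l.length) :
    List.ofFn (fun i : Fin len => l.getD (j + i) d) <:+: l := by
  have : List.ofFn (fun i : Fin len => l.getD (j + i) d) = (l.drop j).take len := by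
    refine List.ext_getElem (by simp; omega) fun i h₁ _ => ?_
    simp only [List.length_ofFn] at h₁
    simp [List.getElem?_eq_getElem (show j + i < l.length by omega)]
  rw [this]
  exact (List.take_prefix _ _).isInfix.trans (List.drop_suffix _ _).isInfix

lemma exists_real_mul_of_mem {γ : A → ℂ} {l : List A} {Y : ℂ}
    (h : ∀ q, q <+: l → ∃ r : ℝ, wordSum γ q = r * Y) {c : A} (hc : c ∈ l) :
    ∃ r : ℝ, γ c = r * Y := by
  obtain ⟨s, t, rfl⟩ := List.append_of_mem hc
  obtain ⟨r₁, h₁⟩ := h s (List.prefix_append _ _)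
  obtain ⟨r₂, h₂⟩ := h (s ++ [c]) ⟨t, by simp⟩
  refine ⟨r₂ - r₁, ?_⟩
  rw [wordSum_append, h₁] at h₂
  simp only [wordSum, List.map_cons, List.map_nil, List.sum_cons, List.sum_nil, add_zero] at h₂
  push_cast
  linear_combination h₂

lemma gammaZ_congr (γ : A → ℂ) {ω ω' : ℤ → A} {n : ℤ}
    (h : ∀ i ∈ Finset.Icc (-(n.natAbs : ℤ)) n.natAbs, ω i = ω' i) :
    gammaZ γ ω n = gammaZ γ ω' n := by
  unfold gammaZ
  split_ifs with hn
  · exact Finset.sum_congr rfl fun i hi => by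
      rw [h]; simp only [Finset.mem_range, Finset.mem_Icc] at hi ⊢; omega
  · congr 1
    exact Finset.sum_congr rfl fun i hi => by
      rw [h]; simp only [Finset.mem_range, Finset.mem_Icc] at hi ⊢; omega

lemma gammaZ_getD_shift (γ : A → ℂ) (l : List A) (d : A) (p : ℕ) {n : ℤ} (h₀ : 0 ≤ p + n)
    (h₁ : p + n ≤ l.length) (hp : p ≤ l.length) :
    gammaZ γ (fun i => l.getD ((p : ℤ) + i).toNat d) n
      = wordSum γ (l.take ((p : ℤ) + n).toNat) - wordSum γ (l.take p) := by
  have key : ∀ j k, j + k ≤ l.length → ∑ i ∈ Finset.range k, γ (l.getD (j + i) d)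
      = wordSum γ (l.take (j + k)) - wordSum γ (l.take j) := fun j k h => by
    rw [← sum_range_getD_eq_wordSum_take γ l d h,
      ← sum_range_getD_eq_wordSum_take γ l d (by omega), Finset.sum_range_add_sub_sum_range]
  unfold gammaZ
  split_ifs with hn
  · rw [show ((p : ℤ) + n).toNat = p + n.toNat by omega, ← key p n.toNat (by omega)]
    exact Finset.sum_congr rfl fun i _ => rfl
  · obtain ⟨k, rfl⟩ : ∃ k : ℕ, n = -k := ⟨(-n).toNat, by omega⟩
    have hk := key (p - k) k (by omega)
    rw [Nat.sub_add_cancel (by omega)] at hk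
    rw [show ((p : ℤ) + -k).toNat = p - k by omega, show (-(-(k : ℤ))).toNat = k by omega,
      neg_eq_iff_eq_neg, neg_sub, ← hk]
    exact Finset.sum_congr rfl fun i hi => by
      dsimp only
      rw [show ((p : ℤ) + (-k + i)).toNat = p - k + i by have := Finset.mem_range.1 hi; omega]

lemma exists_minimalSeq_of_prefix_min_far_from_ends [Finite A] {σ : A → List A} {γ : A → ℂ}
    {a₀ : A} (h : ∀ N : ℕ, ∃ n p, N < p ∧ p + N < (substIter σ n a₀).length ∧
      ∀ k ≤ (substIter σ n a₀).length,
        (wordSum γ ((substIter σ n a₀).take p)).re ≤ (wordSum γ ((substIter σ n a₀).take k)).re) :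
    ∃ ω, MinimalSeq σ γ ω := by
  choose n p hNp hpL hmin using h
  obtain ⟨ω, hω⟩ := exists_frequently_forall_eq fun N (i : ℤ) =>
    (substIter σ (n N) a₀).getD ((p N : ℤ) + i).toNat a₀
  refine ⟨ω, fun m len => ?_, fun k => ?_⟩
  · obtain ⟨N, hN, hagree⟩ :=
      (hω ((Finset.range len).image fun i : ℕ => m + i)).forall_exists_of_atTop (m.natAbs + len)
    have := hNp N
    have := hpL N
    refine ⟨n N, a₀, ?_⟩
    convert ofFn_getD_isInfix (substIter σ (n N) a₀) a₀ (j := ((p N : ℤ) + m).toNat) (len := len)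
      (by omega) using 2
    ext i
    rw [← hagree _ (Finset.mem_image_of_mem _ (Finset.mem_range.2 i.2))]
    congr 1
    omega
  · obtain ⟨N, hN, hagree⟩ :=
      (hω (Finset.Icc (-(k.natAbs : ℤ)) k.natAbs)).forall_exists_of_atTop k.natAbs
    have := hNp N
    have := hpL N
    rw [← gammaZ_congr γ hagree, gammaZ_getD_shift γ _ a₀ (p N) (by omega) (by omega) (by omega),
      Complex.sub_re, sub_nonneg]
    exact hmin N _ (by omega)

lemma unitDir_ofReal_sq {r : ℝ} (hr : r ≠ 0) : unitDir (r : ℂ) ^ 2 = 1 := by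
  have : ((|r| : ℝ) : ℂ) ≠ 0 := by exact_mod_cast abs_ne_zero.2 hr
  rw [unitDir, Complex.norm_real, Real.norm_eq_abs, div_pow,
    div_eq_one_iff_eq (pow_ne_zero 2 this)]
  exact_mod_cast (sq_abs r).symm

lemma norm_mul_re_exp_arg_mul (w c : ℂ) :
    ‖w‖ * ((Circle.exp w.arg : ℂ) * c).re = (w * c).re := by
  conv_rhs => rw [← Complex.norm_mul_exp_arg_mul_I w]
  rw [Circle.coe_exp, mul_assoc, Complex.re_ofReal_mul]

lemma exists_circle_re_pos_re_neg {c₁ c₂ : ℂ} (hc₁ : c₁ ≠ 0) (h : ∀ r : ℝ, c₂ ≠ r * c₁) :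
    ∃ u : Circle, 0 < ((u : ℂ) * c₁).re ∧ ((u : ℂ) * c₂).re < 0 := by
  set ζ := c₂ / c₁
  have hζ : ζ.im ≠ 0 := fun him =>
    h ζ.re (by rw [← div_mul_cancel₀ c₂ hc₁]; congr 1; exact Complex.ext rfl (by simpa))
  -- `w c₁ = 1 + t i`, with `t` chosen so that `Re (w c₂) = Re ((1 + t i) ζ) = -1`
  set w : ℂ := ⟨1, (ζ.re + 1) / ζ.im⟩ / c₁
  have hw₁ : (w * c₁).re = 1 := by rw [div_mul_cancel₀ _ hc₁]
  have hw₂ : (w * c₂).re = -1 := by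
    rw [div_mul_eq_mul_div, mul_div_assoc, Complex.mul_re]
    change 1 * ζ.re - (ζ.re + 1) / ζ.im * ζ.im = -1
    rw [div_mul_cancel₀ _ hζ]
    ring
  refine ⟨Circle.exp w.arg, ?_, ?_⟩
  · have := norm_mul_re_exp_arg_mul w c₁
    nlinarith [norm_nonneg w]
  · have := norm_mul_re_exp_arg_mul w c₂
    nlinarith [norm_nonneg w]

lemma exists_pow_re_pos_re_lt {β : ℂ} (hβ : 1 < ‖β‖) (hβ0 : NotRootOfUnity (unitDir β))
    {c₁ c₂ : ℂ} (hc₁ : c₁ ≠ 0) (hc : ∀ r : ℝ, c₂ ≠ r * c₁) (B : ℝ) :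
    ∃ m : ℕ, 0 < (β ^ m * c₁).re ∧ (β ^ m * c₂).re < B := by
  obtain ⟨u, hu₁, hu₂⟩ := exists_circle_re_pos_re_neg hc₁ hc
  have hβ₀ : (‖β‖ : ℂ) ≠ 0 := by exact_mod_cast (one_pos.trans hβ).ne'
  have hz : (Circle.exp β.arg : ℂ) = unitDir β := by
    rw [Circle.coe_exp, unitDir, eq_div_iff hβ₀, mul_comm, Complex.norm_mul_exp_arg_mul_I]
  have hpow : ∀ m : ℕ, β ^ m = ((‖β‖ ^ m : ℝ) : ℂ) * ((Circle.exp β.arg ^ m : Circle) : ℂ) := by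
    intro m
    rw [Circle.coe_pow, hz, unitDir, Complex.ofReal_pow, ← mul_pow, mul_div_cancel₀ _ hβ₀]
  have hfin : ¬IsOfFinOrder (Circle.exp β.arg) := fun hfin => by
    obtain ⟨n, hn, hzn⟩ := isOfFinOrder_iff_pow_eq_one.1 hfin
    exact hβ0 n hn (by rw [← hz, ← Circle.coe_pow, hzn, Circle.coe_one])
  have hcont : ∀ c : ℂ, Continuous fun v : Circle => ((v : ℂ) * c).re := fun c => by fun_prop
  have hnear : ∀ᶠ v : Circle in 𝓝 u,
      0 < ((v : ℂ) * c₁).re ∧ ((v : ℂ) * c₂).re < ((u : ℂ) * c₂).re / 2 :=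
    (continuousAt_const.eventually_lt (hcont c₁).continuousAt hu₁).and
      ((hcont c₂).continuousAt.eventually_lt continuousAt_const (by linarith))
  have hlarge : ∀ᶠ m : ℕ in atTop, ‖β‖ ^ m * (((u : ℂ) * c₂).re / 2) < B :=
    ((tendsto_pow_atTop_atTop_of_one_lt hβ).atTop_mul_const_of_neg
      (by linarith)).eventually_lt_atBot B
  obtain ⟨m, ⟨hm₁, hm₂⟩, hm₃⟩ :=
    ((Circle.mapClusterPt_atTop_pow_of_not_isOfFinOrder hfin u).frequently hnear).and_eventually
      hlarge |>.exists
  have hβm : 0 < ‖β‖ ^ m := by positivity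
  refine ⟨m, ?_, ?_⟩
  · rw [hpow, mul_assoc, Complex.re_ofReal_mul]
    positivity
  · rw [hpow, mul_assoc, Complex.re_ofReal_mul]
    nlinarith

section Eigenvector

variable [Fintype A] [DecidableEq A] {σ : A → List A} {β : ℂ} {γ : A → ℂ}

lemma IsEigenvector.wordSum_apply (hγ : IsEigenvector σ β γ) (a : A) :
    wordSum γ (σ a) = β * γ a := by
  have h := congrFun hγ.2 a
  rw [Matrix.mulVec, Pi.smul_apply, smul_eq_mul] at h
  rw [← h, wordSum, Finset.sum_list_map_count, dotProduct]
  refine Finset.sum_subset (Finset.subset_univ _) (fun b _ hb => ?_) |>.trans ?_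
  · rw [List.count_eq_zero_of_not_mem (by simpa using hb), zero_smul]
  · simp [substMatrix, nsmul_eq_mul]

lemma IsEigenvector.wordSum_substIter (hγ : IsEigenvector σ β γ) (n : ℕ) (a : A) :
    wordSum γ (substIter σ n a) = β ^ n * γ a := by
  induction n generalizing a with
  | zero => simp [substIter, wordSum]
  | succ n ih =>
    rw [substIter, wordSum_flatten_map ih, hγ.wordSum_apply, pow_succ, mul_assoc]

lemma exists_prefix_wordSum_ne_real_mul (hσ : ∀ a, σ a ≠ []) {n₀ : ℕ}
    (hprim : ∀ a b : A, a ∈ substIter σ n₀ b) (hγ : IsEigenvector σ β γ)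
    (hβ0 : NotRootOfUnity (unitDir β)) (a₀ : A) :
    ∃ j q, q <+: substIter σ j a₀ ∧
      ∀ r : ℝ, wordSum γ q ≠ r * wordSum γ (substIter σ j a₀) := by
  -- Otherwise every letter `c` of `σⁿ⁰(a₀)` and of `σⁿ⁰⁺¹(a₀)` has `γ c` a real multiple of
  -- `βⁿ⁰ γ(a₀)` and of `βⁿ⁰⁺¹ γ(a₀)`; a letter with `γ c ≠ 0` then forces `β` to be real.
  by_contra! H
  obtain ⟨c, hc⟩ := Function.ne_iff.mp hγ.1
  obtain ⟨b, t, hb⟩ := List.exists_cons_of_ne_nil (hσ a₀)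
  have hc' : c ∈ substIter σ (n₀ + 1) a₀ :=
    List.mem_flatten.2 ⟨_, List.mem_map.2 ⟨b, by simp [hb], rfl⟩, hprim c b⟩
  obtain ⟨r₁, h₁⟩ := exists_real_mul_of_mem (H n₀) (hprim c a₀)
  obtain ⟨r₂, h₂⟩ := exists_real_mul_of_mem (H (n₀ + 1)) hc'
  rw [hγ.wordSum_substIter] at h₁ h₂
  have hr₁ : r₁ ≠ 0 := by rintro rfl; simp_all
  have hr₂ : r₂ ≠ 0 := by rintro rfl; simp_all
  have hX : β ^ n₀ * γ a₀ ≠ 0 := by rintro h; simp_all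
  have hβ : β = ((r₁ / r₂ : ℝ) : ℂ) := by
    have : (r₂ * β - r₁ : ℂ) * (β ^ n₀ * γ a₀) = 0 := by linear_combination h₁ - h₂
    rw [Complex.ofReal_div, eq_div_iff (by exact_mod_cast hr₂)]
    linear_combination (mul_eq_zero.1 this).resolve_right hX
  exact hβ0 2 two_pos (hβ ▸ unitDir_ofReal_sq (div_ne_zero hr₁ hr₂))

lemma exists_substIter_prefix_min_far_from_ends (hσ : ∀ a, σ a ≠ []) {n₀ : ℕ}
    (hprim : ∀ a b : A, a ∈ substIter σ n₀ b) (hγ : IsEigenvector σ β γ) (hβ : 1 < ‖β‖)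
    (hβ0 : NotRootOfUnity (unitDir β)) {a₀ : A} (ha₀ : γ a₀ ≠ 0) (N : ℕ) :
    ∃ n p, N < p ∧ p + N < (substIter σ n a₀).length ∧ ∀ k ≤ (substIter σ n a₀).length,
      (wordSum γ ((substIter σ n a₀).take p)).re ≤ (wordSum γ ((substIter σ n a₀).take k)).re := by
  obtain ⟨j, q, hq, hqr⟩ := exists_prefix_wordSum_ne_real_mul hσ hprim hγ hβ0 a₀
  have hβ₀ : β ≠ 0 := norm_pos_iff.1 (one_pos.trans hβ)
  have hc₁ : wordSum γ (substIter σ j a₀) ≠ 0 := by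
    rw [hγ.wordSum_substIter]
    exact mul_ne_zero (pow_ne_zero _ hβ₀) ha₀
  obtain ⟨m, hm₁, hm₂⟩ := exists_pow_re_pos_re_lt hβ hβ0 hc₁ hqr (-(N * ∑ b, ‖γ b‖))
  have hsum := wordSum_flatten_map (hγ.wordSum_substIter m)
  set W := substIter σ (m + j) a₀
  set Q := (q.map (substIter σ m)).flatten
  have hW : W = ((substIter σ j a₀).map (substIter σ m)).flatten := substIter_add σ m j a₀
  have hQW : Q <+: W := by
    obtain ⟨t, ht⟩ := hq
    exact ⟨(t.map (substIter σ m)).flatten, by simp [hW, Q, ← ht]⟩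
  have hstep : ∀ k, |(wordSum γ (W.take (k + 1))).re - (wordSum γ (W.take k)).re| ≤ ∑ b, ‖γ b‖ :=
    fun k => by
      rw [← Complex.sub_re]
      exact (Complex.abs_re_le_norm _).trans (norm_wordSum_take_succ_sub_le γ W k)
  obtain ⟨p, hNp, hpL, hmin⟩ := exists_min_far_from_ends (f := fun k => (wordSum γ (W.take k)).re)
    hstep (by simp [wordSum])
    (by rw [List.take_length, hW, hsum]; exact hm₁.le) hQW.length_le
    (by rwa [← List.prefix_iff_eq_take.1 hQW, hsum])
  exact ⟨m + j, p, hNp, hpL, hmin⟩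

end Eigenvector

end IEMWandering

/-- **Lemma 4.4** (existence of minimal sequences). Let `T` be a self-similar i.e.m.
with primitive associated substitution `σ`, `β` an eigenvalue of `M` with `|β| > 1`
and `β/|β|` not a root of unity, and `γ` an eigenvector for `β`. Then there exists a
minimal sequence for `γ`: some `ω ∈ Ω_σ` with `Re(γ_n(ω)) ≥ 0` for all `n ∈ ℤ`. -/
theorem existsMinimalSeq {A : Type} [Fintype A] [DecidableEq A]
    (T : IEMWandering.SelfSimilarIEM A) (hprim : IEMWandering.Primitive T.σ)
    (β : ℂ) (γ : A → ℂ) (hβ : 1 < ‖β‖)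
    (hβ0 : IEMWandering.NotRootOfUnity (IEMWandering.unitDir β))
    (hγ : IEMWandering.IsEigenvector T.σ β γ) :
    ∃ ω : ℤ → A, IEMWandering.InOmega T.σ ω ∧
      ∀ n : ℤ, 0 ≤ (IEMWandering.gammaZ γ ω n).re := by
  obtain ⟨n₀, hn₀⟩ := hprim
  obtain ⟨a₀, ha₀⟩ := Function.ne_iff.mp hγ.1
  exact IEMWandering.exists_minimalSeq_of_prefix_min_far_from_ends
    (IEMWandering.exists_substIter_prefix_min_far_from_ends T.σ_ne hn₀ hγ hβ hβ0 ha₀)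
end
end

section
/- (Continuation property.) Let a ∈ 𝒜 and τ ∈ S¹. If x ∈ 𝒮_a satisfies z_a(x) ∈ E_a(τ), then z_{c_1^x}(S(x)) ∈ E_{c_1^x}(β₀^{-1}τ), where S is the left shift, and moreover Re(τ z_a(x)) = Re(τ β^{-1} γ(p_1^x)) + |β|^{-1} v_{c_1^x}(β₀^{-1}τ). Similarly, if x ∈ 𝒮_a satisfies z_a^{(n)}(x) ∈ E_a^{(n)}(τ) for an integer n ≥ 1, then z_{c_1^x}^{(n−1)}(S(x)) ∈ E_{c_1^x}^{(n−1)}(β₀^{-1}τ) and Re(τ z_a^{(n)}(x)) = Re(τ β^{-1} γ(p_1^x)) + |β|^{-1} v_{c_1^x}^{(n−1)}(β₀^{-1}τ). -/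
open Complex MeasureTheory Filter Set
open scoped BigOperators

noncomputable section

/-!
Prepending the first triple of `x` to any `y ∈ 𝒮_{c₁}` gives an element of `𝒮_a`, and
`z_a = β⁻¹ γ(p₁) + β⁻¹ z_{c₁} ∘ S`, likewise
`z_a^{(n)} = β⁻¹ γ(p₁) + β⁻¹ z_{c₁}^{(n-1)} ∘ S`. Since `τ β⁻¹ = |β|⁻¹ β₀⁻¹ τ`, the value
`Re(τ z_a(x))` is a constant plus `|β|⁻¹ Re(β₀⁻¹ τ z_{c₁}(S x))`, so `x` can only minimise
the former if `S x` minimises the latter over all of `𝒮_{c₁}`. The infima are those of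
bounded sets because `𝒜` is finite and `|β| > 1`.
-/

section MinOn

variable {α β : Type*} [ConditionallyCompleteLattice β] {f : α → β} {s : Set α} {a : α}

theorem isMinOn_of_eq_csInf_image (hbdd : BddBelow (f '' s)) (ha : f a = sInf (f '' s)) :
    IsMinOn f s a :=
  fun _ hx => ha.trans_le (csInf_le hbdd (mem_image_of_mem f hx))

theorem IsMinOn.eq_csInf_image (h : IsMinOn f s a) (ha : a ∈ s) : f a = sInf (f '' s) :=
  (IsLeast.csInf_eq ⟨mem_image_of_mem f ha, forall_mem_image.mpr h⟩).symm

end MinOn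

namespace IEMWandering

variable {A : Type} {σ : A → List A} {β : ℂ} {γ : A → ℂ} {a : A} {x : ℕ → Triple A}

theorem InS.shiftS (hx : InS σ a x) : InS σ (x 0).2.1 (shiftS x) :=
  ⟨hx.2 0, fun m => hx.2 (m + 1)⟩

theorem InS.cons {y : ℕ → Triple A} (hx : InS σ a x) (hy : InS σ (x 0).2.1 y) :
    InS σ a (Stream'.cons (x 0) y) :=
  ⟨hx.1, fun m => m.casesOn hy.1 hy.2⟩

theorem InS.exists_eq_append (hx : InS σ a x) (m : ℕ) :
    ∃ b, σ b = (x m).1 ++ (x m).2.1 :: (x m).2.2 :=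
  m.casesOn ⟨a, hx.1⟩ fun m => ⟨_, hx.2 m⟩

theorem zrep_eq_add (hsum : Summable fun m : ℕ => β⁻¹ ^ (m + 1) * wordSum γ (x m).1) :
    zrep β γ x = β⁻¹ * wordSum γ (x 0).1 + β⁻¹ * zrep β γ (shiftS x) := by
  rw [zrep, hsum.tsum_eq_zero_add, zrep, ← tsum_mul_left, pow_one]
  congr 1
  exact tsum_congr fun m => by simp only [shiftS]; ring

theorem zrepN_succ (n : ℕ) (x : ℕ → Triple A) :
    zrepN β γ (n + 1) x = β⁻¹ * wordSum γ (x 0).1 + β⁻¹ * zrepN β γ n (shiftS x) := by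
  rw [zrepN, zrepN, Finset.sum_range_succ', Finset.mul_sum, add_comm, pow_one]
  congr 1
  exact Finset.sum_congr rfl fun m _ => by simp only [shiftS]; ring

section Bounds

variable [Finite A]

theorem exists_norm_wordSum_prefix_le (σ : A → List A) (γ : A → ℂ) :
    ∃ C, ∀ b p c s, σ b = p ++ c :: s → ‖wordSum γ p‖ ≤ C := by
  obtain ⟨C, hC⟩ := Finite.bddAbove_range fun b => ((σ b).map fun l => ‖γ l‖).sum
  refine ⟨C, fun b p c s hb => ?_⟩
  calc ‖wordSum γ p‖ ≤ (p.map fun l => ‖γ l‖).sum := by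
        simpa only [wordSum, List.map_map, Function.comp_def] using
          List.le_sum_of_subadditive (‖·‖) norm_zero.le norm_add_le (p.map γ)
    _ ≤ ((σ b).map fun l => ‖γ l‖).sum := by
        rw [hb]
        exact ((List.sublist_append_left p _).map _).sum_le_sum
          (by simp only [List.mem_map]; rintro _ ⟨l, -, rfl⟩; exact norm_nonneg _)
    _ ≤ C := hC ⟨b, rfl⟩

theorem exists_summable_norm_term_le (hβ : 1 < ‖β‖) (σ : A → List A) (γ : A → ℂ) :
    ∃ g : ℕ → ℝ, Summable g ∧ ∀ c (x : ℕ → Triple A), InS σ c x →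
      ∀ m, ‖β⁻¹ ^ (m + 1) * wordSum γ (x m).1‖ ≤ g m := by
  obtain ⟨C, hC⟩ := exists_norm_wordSum_prefix_le σ γ
  have hr : ‖β‖⁻¹ < 1 := inv_lt_one_of_one_lt₀ hβ
  refine ⟨fun m => ‖β‖⁻¹ ^ (m + 1) * C,
    ((summable_geometric_of_lt_one (by positivity) hr).mul_left ‖β‖⁻¹).mul_right C
      |>.congr fun m => by ring, fun c x hx m => ?_⟩
  obtain ⟨b, hb⟩ := hx.exists_eq_append m
  rw [norm_mul, norm_pow, norm_inv]
  exact mul_le_mul_of_nonneg_left (hC b _ _ _ hb) (by positivity)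

theorem InS.summable_zrep (hβ : 1 < ‖β‖) (hx : InS σ a x) :
    Summable fun m : ℕ => β⁻¹ ^ (m + 1) * wordSum γ (x m).1 := by
  obtain ⟨g, hg, hle⟩ := exists_summable_norm_term_le hβ σ γ
  exact hg.of_norm_bounded (hle a x hx)

theorem bddBelow_re_mul_image {S : Set ℂ} {K : ℝ} (hS : ∀ z ∈ S, ‖z‖ ≤ K) (τ : ℂ) :
    BddBelow ((fun z => (τ * z).re) '' S) := by
  refine ⟨-(‖τ‖ * K), ?_⟩
  rintro _ ⟨z, hz, rfl⟩
  calc -(‖τ‖ * K) ≤ -‖τ * z‖ := by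
        rw [norm_mul]; exact neg_le_neg (mul_le_mul_of_nonneg_left (hS z hz) (norm_nonneg τ))
    _ ≤ (τ * z).re := neg_le_of_abs_le (abs_re_le_norm _)

theorem bddBelow_re_Frac (hβ : 1 < ‖β‖) (a : A) (τ : ℂ) :
    BddBelow ((fun z => (τ * z).re) '' Frac σ β γ a) := by
  obtain ⟨g, hg, hle⟩ := exists_summable_norm_term_le hβ σ γ
  refine bddBelow_re_mul_image (K := ∑' m, g m) ?_ τ
  rintro _ ⟨x, hx, rfl⟩
  exact tsum_of_norm_bounded hg.hasSum (hle a x hx)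

theorem bddBelow_re_FracN (hβ : 1 < ‖β‖) (n : ℕ) (a : A) (τ : ℂ) :
    BddBelow ((fun z => (τ * z).re) '' FracN σ β γ n a) := by
  obtain ⟨g, hg, hle⟩ := exists_summable_norm_term_le hβ σ γ
  refine bddBelow_re_mul_image (K := ∑' m, g m) ?_ τ
  rintro _ ⟨x, hx, rfl⟩
  exact (norm_sum_le_of_le _ fun m _ => hle a x hx m).trans
    (hg.sum_le_tsum _ fun m _ => (norm_nonneg _).trans (hle a x hx m))

end Bounds

theorem re_mul_inv_mul_add (hβ : β ≠ 0) (τ p w : ℂ) :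
    (τ * (β⁻¹ * p + β⁻¹ * w)).re =
      (τ * β⁻¹ * p).re + ‖β‖⁻¹ * ((unitDir β)⁻¹ * τ * w).re := by
  have hβ' : (‖β‖ : ℂ) ≠ 0 := by exact_mod_cast norm_ne_zero_iff.mpr hβ
  have key : τ * (β⁻¹ * w) = ((‖β‖⁻¹ : ℝ) : ℂ) * ((unitDir β)⁻¹ * τ * w) := by
    rw [unitDir]
    push_cast
    field_simp
  rw [mul_add, add_re, key, re_ofReal_mul, ← mul_assoc τ β⁻¹ p]

variable {Z Zc : (ℕ → Triple A) → ℂ} {τ : ℂ}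

theorem isMinOn_shiftS (hβ : β ≠ 0)
    (hrec : ∀ y, InS σ a y → Z y = β⁻¹ * wordSum γ (y 0).1 + β⁻¹ * Zc (shiftS y))
    (hx : InS σ a x) (hmin : IsMinOn (fun z => (τ * z).re) (Z '' {y | InS σ a y}) (Z x)) :
    IsMinOn (fun z => ((unitDir β)⁻¹ * τ * z).re) (Zc '' {y | InS σ (x 0).2.1 y})
      (Zc (shiftS x)) := by
  rintro _ ⟨y, hy, rfl⟩
  have hle : (τ * Z x).re ≤ (τ * Z (Stream'.cons (x 0) y)).re :=
    hmin (mem_image_of_mem Z (hx.cons hy))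
  rw [hrec x hx, hrec _ (hx.cons hy), re_mul_inv_mul_add hβ, re_mul_inv_mul_add hβ] at hle
  exact le_of_mul_le_mul_left ((add_le_add_iff_left _).mp hle)
    (inv_pos.mpr (norm_pos_iff.mpr hβ))

theorem extPts_shiftS_of_rec (hβ : β ≠ 0)
    (hrec : ∀ y, InS σ a y → Z y = β⁻¹ * wordSum γ (y 0).1 + β⁻¹ * Zc (shiftS y))
    (hx : InS σ a x) (hbdd : BddBelow ((fun z => (τ * z).re) '' (Z '' {y | InS σ a y})))
    (hval : (τ * Z x).re = sInf ((fun z => (τ * z).re) '' (Z '' {y | InS σ a y}))) :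
    (Zc (shiftS x) ∈ Zc '' {y | InS σ (x 0).2.1 y} ∧
      ((unitDir β)⁻¹ * τ * Zc (shiftS x)).re =
        sInf ((fun z => ((unitDir β)⁻¹ * τ * z).re) '' (Zc '' {y | InS σ (x 0).2.1 y}))) ∧
    (τ * Z x).re = (τ * β⁻¹ * wordSum γ (x 0).1).re + ‖β‖⁻¹ *
      sInf ((fun z => ((unitDir β)⁻¹ * τ * z).re) '' (Zc '' {y | InS σ (x 0).2.1 y})) := by
  have hmem : Zc (shiftS x) ∈ Zc '' {y | InS σ (x 0).2.1 y} := mem_image_of_mem Zc hx.shiftS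
  have hinf :=
    (isMinOn_shiftS hβ hrec hx (isMinOn_of_eq_csInf_image hbdd hval)).eq_csInf_image hmem
  refine ⟨⟨hmem, hinf⟩, ?_⟩
  rw [← hinf, hrec x hx, re_mul_inv_mul_add hβ]

end IEMWandering

theorem continuation_general {A : Type} [Fintype A]
    (σ : A → List A)
    (β : ℂ) (γ : A → ℂ) (hβ : 1 < ‖β‖)
    (a : A) (τ : ℂ) :
    (∀ x : ℕ → IEMWandering.Triple A, IEMWandering.InS σ a x →
      IEMWandering.zrep β γ x ∈ IEMWandering.ExtPts σ β γ a τ →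
      IEMWandering.zrep β γ (IEMWandering.shiftS x) ∈
        IEMWandering.ExtPts σ β γ ((x 0).2.1) ((IEMWandering.unitDir β)⁻¹ * τ) ∧
      (τ * IEMWandering.zrep β γ x).re =
        (τ * β⁻¹ * IEMWandering.wordSum γ (x 0).1).re +
          (‖β‖)⁻¹ *
            IEMWandering.vDir σ β γ ((x 0).2.1) ((IEMWandering.unitDir β)⁻¹ * τ)) ∧
    (∀ n : ℕ, 1 ≤ n → ∀ x : ℕ → IEMWandering.Triple A, IEMWandering.InS σ a x →
      IEMWandering.zrepN β γ n x ∈ IEMWandering.ExtPtsN σ β γ n a τ →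
      IEMWandering.zrepN β γ (n - 1) (IEMWandering.shiftS x) ∈
        IEMWandering.ExtPtsN σ β γ (n - 1) ((x 0).2.1)
          ((IEMWandering.unitDir β)⁻¹ * τ) ∧
      (τ * IEMWandering.zrepN β γ n x).re =
        (τ * β⁻¹ * IEMWandering.wordSum γ (x 0).1).re +
          (‖β‖)⁻¹ *
            IEMWandering.vDirN σ β γ (n - 1) ((x 0).2.1)
              ((IEMWandering.unitDir β)⁻¹ * τ)) := by
  open IEMWandering in
  have hβ0 : β ≠ 0 := norm_pos_iff.mp (one_pos.trans hβ)
  refine ⟨fun x hx hext => ?_, fun n hn x hx hext => ?_⟩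
  · exact extPts_shiftS_of_rec hβ0 (fun y hy => zrep_eq_add (hy.summable_zrep hβ)) hx
      (bddBelow_re_Frac hβ a τ) hext.2
  · obtain ⟨k, rfl⟩ := Nat.exists_eq_add_of_le' hn
    exact extPts_shiftS_of_rec hβ0 (fun y _ => zrepN_succ k y) hx
      (bddBelow_re_FracN hβ (k + 1) a τ) hext.2

/-- **Lemma 5.5** (continuation property). If `x ∈ 𝒮_a` represents an extreme point
of `𝔉_a` in direction `τ`, then the shifted sequence represents an extreme point of
`𝔉_{c₁}` in direction `β₀⁻¹τ`, and
`Re(τ z_a(x)) = Re(τβ⁻¹γ(p₁)) + |β|⁻¹ v_{c₁}(β₀⁻¹τ)`; similarly for the finite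
approximations. -/
theorem continuation {A : Type} [Fintype A] [DecidableEq A]
    (σ : A → List A) (hprim : IEMWandering.Primitive σ)
    (β : ℂ) (γ : A → ℂ) (hβ : 1 < ‖β‖)
    (hγ : IEMWandering.IsEigenvector σ β γ)
    (a : A) (τ : ℂ) (hτ : ‖τ‖ = 1) :
    (∀ x : ℕ → IEMWandering.Triple A, IEMWandering.InS σ a x →
      IEMWandering.zrep β γ x ∈ IEMWandering.ExtPts σ β γ a τ →
      IEMWandering.zrep β γ (IEMWandering.shiftS x) ∈
        IEMWandering.ExtPts σ β γ ((x 0).2.1) ((IEMWandering.unitDir β)⁻¹ * τ) ∧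
      (τ * IEMWandering.zrep β γ x).re =
        (τ * β⁻¹ * IEMWandering.wordSum γ (x 0).1).re +
          (‖β‖)⁻¹ *
            IEMWandering.vDir σ β γ ((x 0).2.1) ((IEMWandering.unitDir β)⁻¹ * τ)) ∧
    (∀ n : ℕ, 1 ≤ n → ∀ x : ℕ → IEMWandering.Triple A, IEMWandering.InS σ a x →
      IEMWandering.zrepN β γ n x ∈ IEMWandering.ExtPtsN σ β γ n a τ →
      IEMWandering.zrepN β γ (n - 1) (IEMWandering.shiftS x) ∈
        IEMWandering.ExtPtsN σ β γ (n - 1) ((x 0).2.1)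
          ((IEMWandering.unitDir β)⁻¹ * τ) ∧
      (τ * IEMWandering.zrepN β γ n x).re =
        (τ * β⁻¹ * IEMWandering.wordSum γ (x 0).1).re +
          (‖β‖)⁻¹ *
            IEMWandering.vDirN σ β γ (n - 1) ((x 0).2.1)
              ((IEMWandering.unitDir β)⁻¹ * τ)) :=
  continuation_general σ β γ hβ a τ
end
end

section
/- (Exponential approximation.) Let a ∈ 𝒜 and τ ∈ S¹. For all n ≥ 1, |v_a^{(n)}(τ) − v_a(τ)| ≤ C |β|^{-n}, where C = max{ −v_b(τ') : b ∈ 𝒜, τ' ∈ S¹ } < ∞. -/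
open Complex MeasureTheory Filter Set
open scoped BigOperators

noncomputable section

/-!
For `x ∈ 𝒮_a` the tail of `x` after `n` steps lies in some `𝒮_c`, and
`z_a(x) = z_a^{(n)}(x) + β^{-n} z_c(tail)`. For every unit `τ'` and `z ∈ 𝔉_c` we have
`-C ≤ v_c(τ') ≤ Re(τ' z) = -Re(-τ' z) ≤ -v_c(-τ') ≤ C`, so `Re(τ z_a(x))` and
`Re(τ z_a^{(n)}(x))` differ by at most `C |β|^{-n}` for every `x ∈ 𝒮_a`, and therefore so do
their infima over `𝒮_a`.
-/

theorem abs_sInf_image_sub_sInf_image_le {X : Type*} {S : Set X} {f g : X → ℝ} {ε : ℝ}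
    (hε : 0 ≤ ε) (hg : BddBelow (g '' S)) (hfg : ∀ x ∈ S, |f x - g x| ≤ ε) :
    |sInf (f '' S) - sInf (g '' S)| ≤ ε := by
  rcases S.eq_empty_or_nonempty with rfl | hS
  · simpa using hε
  have hf : BddBelow (f '' S) := by
    obtain ⟨m, hm⟩ := hg
    refine ⟨m - ε, ?_⟩
    rintro _ ⟨x, hx, rfl⟩
    have := hm ⟨x, hx, rfl⟩
    linarith [(abs_le.mp (hfg x hx)).1]
  have hgf : sInf (g '' S) - ε ≤ sInf (f '' S) := by
    refine le_csInf (hS.image f) ?_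
    rintro _ ⟨x, hx, rfl⟩
    linarith [csInf_le hg ⟨x, hx, rfl⟩, (abs_le.mp (hfg x hx)).1]
  have hfg' : sInf (f '' S) - ε ≤ sInf (g '' S) := by
    refine le_csInf (hS.image g) ?_
    rintro _ ⟨x, hx, rfl⟩
    linarith [csInf_le hf ⟨x, hx, rfl⟩, (abs_le.mp (hfg x hx)).2]
  exact abs_le.mpr ⟨by linarith, by linarith⟩

namespace IEMWandering

variable {A : Type} {σ : A → List A} {β : ℂ} {γ : A → ℂ}

theorem norm_wordSum_le (γ : A → ℂ) (w : List A) :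
    ‖wordSum γ w‖ ≤ (w.map fun i => ‖γ i‖).sum := by
  simpa [wordSum, List.map_map, Function.comp_def] using
    List.le_sum_of_subadditive norm norm_zero.le norm_add_le (w.map γ)

theorem InS.exists_isDecomp {a : A} {x : ℕ → Triple A} (hx : InS σ a x) (m : ℕ) :
    ∃ b, IsDecomp σ b (x m) := by
  cases m with
  | zero => exact ⟨a, hx.1⟩
  | succ k => exact ⟨_, hx.2 k⟩

theorem InS.exists_shift {a : A} {x : ℕ → Triple A} (hx : InS σ a x) (n : ℕ) :
    ∃ c, InS σ c (fun m => x (m + n)) := by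
  cases n with
  | zero => exact ⟨a, hx⟩
  | succ k =>
    refine ⟨(x k).2.1, by simpa using hx.2 k, fun m => ?_⟩
    simpa [Nat.add_right_comm] using hx.2 (m + (k + 1))

theorem zrep_eq_zrepN_add {x : ℕ → Triple A}
    (hs : Summable fun m => β⁻¹ ^ (m + 1) * wordSum γ (x m).1) (n : ℕ) :
    zrep β γ x = zrepN β γ n x + β⁻¹ ^ n * zrep β γ (fun m => x (m + n)) := by
  rw [zrep, zrepN, zrep, ← tsum_mul_left, ← hs.sum_add_tsum_nat_add n]
  congr 2 with m
  ring

theorem Frac_eq_image (a : A) : Frac σ β γ a = zrep β γ '' {x | InS σ a x} := rfl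

theorem FracN_eq_image (n : ℕ) (a : A) :
    FracN σ β γ n a = zrepN β γ n '' {x | InS σ a x} := rfl

theorem vDir_eq_sInf (a : A) (τ : ℂ) :
    vDir σ β γ a τ = sInf ((fun x => (τ * zrep β γ x).re) '' {x | InS σ a x}) := by
  rw [vDir, Frac_eq_image, Set.image_image]

theorem vDirN_eq_sInf (n : ℕ) (a : A) (τ : ℂ) :
    vDirN σ β γ n a τ = sInf ((fun x => (τ * zrepN β γ n x).re) '' {x | InS σ a x}) := by
  rw [vDirN, FracN_eq_image, Set.image_image]

theorem neg_norm_mul_mem_lowerBounds {K : ℝ}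
    (hK : ∀ (b : A) (x : ℕ → Triple A), InS σ b x → ‖zrep β γ x‖ ≤ K) (b : A) (τ : ℂ) :
    -(‖τ‖ * K) ∈ lowerBounds ((fun z => (τ * z).re) '' Frac σ β γ b) := by
  rintro _ ⟨_, ⟨x, hx, rfl⟩, rfl⟩
  have h := (abs_le.mp ((abs_re_le_norm _).trans (norm_mul_le τ (zrep β γ x)))).1
  nlinarith [hK b x hx, norm_nonneg τ]

/-- The constant `C` of the paper. -/
def vDirConst (σ : A → List A) (β : ℂ) (γ : A → ℂ) : ℝ :=
  sSup { r : ℝ | ∃ (b : A) (τ' : ℂ), ‖τ'‖ = 1 ∧ r = -vDir σ β γ b τ' }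

variable [Fintype A]

theorem norm_wordSum_le_of_isDecomp {b : A} {d : Triple A}
    (hd : IsDecomp σ b d) :
    ‖wordSum γ d.1‖ ≤ ∑ c, ((σ c).map fun i => ‖γ i‖).sum := by
  have hnonneg : ∀ c, 0 ≤ ((σ c).map fun i => ‖γ i‖).sum := fun c =>
    List.sum_nonneg (by simp)
  calc ‖wordSum γ d.1‖ ≤ (d.1.map fun i => ‖γ i‖).sum := norm_wordSum_le γ d.1
    _ ≤ ((σ b).map fun i => ‖γ i‖).sum := by
      rw [hd]
      refine ((List.prefix_append _ _).sublist.map _).sum_le_sum fun _ h => ?_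
      obtain ⟨i, -, rfl⟩ := List.mem_map.mp h
      exact norm_nonneg _
    _ ≤ ∑ c, ((σ c).map fun i => ‖γ i‖).sum :=
      Finset.single_le_sum (fun c _ => hnonneg c) (Finset.mem_univ b)

theorem InS.norm_term_le {a : A} {x : ℕ → Triple A} (hx : InS σ a x) (m : ℕ) :
    ‖β⁻¹ ^ (m + 1) * wordSum γ (x m).1‖ ≤
      (∑ c, ((σ c).map fun i => ‖γ i‖).sum) * ‖β‖⁻¹ * ‖β‖⁻¹ ^ m := by
  obtain ⟨b, hb⟩ := hx.exists_isDecomp m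
  rw [norm_mul, norm_pow, norm_inv, pow_succ]
  calc ‖β‖⁻¹ ^ m * ‖β‖⁻¹ * ‖wordSum γ (x m).1‖
      ≤ ‖β‖⁻¹ ^ m * ‖β‖⁻¹ * ∑ c, ((σ c).map fun i => ‖γ i‖).sum := by
        gcongr
        exact norm_wordSum_le_of_isDecomp hb
    _ = _ := by ring

theorem InS.summable (hβ : 1 < ‖β‖) {a : A} {x : ℕ → Triple A} (hx : InS σ a x) :
    Summable fun m => β⁻¹ ^ (m + 1) * wordSum γ (x m).1 :=
  ((summable_geometric_of_lt_one (by positivity) (inv_lt_one_of_one_lt₀ hβ)).mul_left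
    _).of_norm_bounded hx.norm_term_le

theorem exists_norm_zrep_le (hβ : 1 < ‖β‖) :
    ∃ K, 0 ≤ K ∧ ∀ (b : A) (x : ℕ → Triple A), InS σ b x → ‖zrep β γ x‖ ≤ K := by
  set B := ∑ c, ((σ c).map fun i => ‖γ i‖).sum
  have hB : 0 ≤ B := Finset.sum_nonneg fun c _ => List.sum_nonneg (by simp)
  have hr : ‖β‖⁻¹ < 1 := inv_lt_one_of_one_lt₀ hβ
  have hr' : 0 < 1 - ‖β‖⁻¹ := sub_pos.mpr hr
  refine ⟨B * ‖β‖⁻¹ * (1 - ‖β‖⁻¹)⁻¹, by positivity, fun b x hx => ?_⟩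
  exact tsum_of_norm_bounded
    ((hasSum_geometric_of_lt_one (by positivity) hr).mul_left _) hx.norm_term_le

theorem bddBelow_re_image_Frac (hβ : 1 < ‖β‖) (b : A) (τ : ℂ) :
    BddBelow ((fun z => (τ * z).re) '' Frac σ β γ b) :=
  have ⟨_, _, hK⟩ := exists_norm_zrep_le (σ := σ) (γ := γ) hβ
  ⟨_, neg_norm_mul_mem_lowerBounds hK b τ⟩

theorem vDir_le_re_mul_zrep (hβ : 1 < ‖β‖) {b : A} {x : ℕ → Triple A} (hx : InS σ b x)
    (τ : ℂ) : vDir σ β γ b τ ≤ (τ * zrep β γ x).re :=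
  csInf_le (bddBelow_re_image_Frac hβ b τ) ⟨zrep β γ x, ⟨x, hx, rfl⟩, rfl⟩

theorem vDir_add_vDir_neg_nonpos (hβ : 1 < ‖β‖) (b : A) (τ : ℂ) :
    vDir σ β γ b τ + vDir σ β γ b (-τ) ≤ 0 := by
  rcases (Frac σ β γ b).eq_empty_or_nonempty with h | ⟨_, x, hx, rfl⟩
  · simp [vDir, h]
  have h1 := vDir_le_re_mul_zrep (γ := γ) hβ hx τ
  have h2 := vDir_le_re_mul_zrep (γ := γ) hβ hx (-τ)
  rw [neg_mul, neg_re] at h2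
  linarith

theorem neg_vDir_le_vDirConst (hβ : 1 < ‖β‖) (b : A) {τ : ℂ} (hτ : ‖τ‖ = 1) :
    -vDir σ β γ b τ ≤ vDirConst σ β γ := by
  obtain ⟨K, hK0, hK⟩ := exists_norm_zrep_le (σ := σ) (γ := γ) hβ
  refine le_csSup ⟨K, ?_⟩ ⟨b, τ, hτ, rfl⟩
  rintro _ ⟨c, τ', hτ', rfl⟩
  have h := Real.le_sInf (neg_norm_mul_mem_lowerBounds hK c τ') (by rw [hτ']; linarith)
  rw [hτ', one_mul] at h
  exact neg_le.mp h

theorem vDirConst_nonneg [Nonempty A] (hβ : 1 < ‖β‖) : 0 ≤ vDirConst σ β γ := by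
  obtain ⟨b⟩ := ‹Nonempty A›
  have h1 := neg_vDir_le_vDirConst (σ := σ) (γ := γ) hβ b (norm_one (α := ℂ))
  have h2 := neg_vDir_le_vDirConst (σ := σ) (γ := γ) hβ b (τ := -1) (by simp)
  linarith [vDir_add_vDir_neg_nonpos (σ := σ) (γ := γ) hβ b 1]

theorem abs_re_mul_zrep_le (hβ : 1 < ‖β‖) {b : A} {x : ℕ → Triple A} (hx : InS σ b x)
    (w : ℂ) : |(w * zrep β γ x).re| ≤ ‖w‖ * vDirConst σ β γ := by
  rcases eq_or_ne w 0 with rfl | hw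
  · simp
  set u := w / ‖w‖
  have hw' : (‖w‖ : ℂ) ≠ 0 := ofReal_ne_zero.mpr (norm_ne_zero_iff.mpr hw)
  have hu : ‖u‖ = 1 := by simp [u, hw]
  have hwu : w * zrep β γ x = (‖w‖ : ℂ) * (u * zrep β γ x) := by
    simp only [u]
    field_simp
  have hlow := vDir_le_re_mul_zrep (γ := γ) hβ hx u
  have hup := vDir_le_re_mul_zrep (γ := γ) hβ hx (-u)
  rw [neg_mul, neg_re] at hup
  have hC₁ := neg_vDir_le_vDirConst (σ := σ) (γ := γ) hβ b hu
  have hC₂ := neg_vDir_le_vDirConst (σ := σ) (γ := γ) hβ b (τ := -u) (by rw [norm_neg, hu])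
  rw [hwu, re_ofReal_mul, abs_mul, abs_norm]
  exact mul_le_mul_of_nonneg_left (abs_le.mpr ⟨by linarith, by linarith⟩) (norm_nonneg w)

theorem abs_re_mul_zrepN_sub_re_mul_zrep_le (hβ : 1 < ‖β‖) {a : A} {x : ℕ → Triple A}
    (hx : InS σ a x) {τ : ℂ} (hτ : ‖τ‖ = 1) (n : ℕ) :
    |(τ * zrepN β γ n x).re - (τ * zrep β γ x).re| ≤ vDirConst σ β γ * ‖β‖⁻¹ ^ n := by
  obtain ⟨c, hc⟩ := hx.exists_shift n
  have hsplit : τ * zrep β γ x - τ * zrepN β γ n x =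
      (τ * β⁻¹ ^ n) * zrep β γ (fun m => x (m + n)) := by
    rw [zrep_eq_zrepN_add (hx.summable hβ) n]
    ring
  rw [abs_sub_comm, ← sub_re, hsplit, mul_comm (vDirConst σ β γ)]
  simpa [hτ] using abs_re_mul_zrep_le hβ hc (τ * β⁻¹ ^ n)

end IEMWandering

theorem exponential_approximation_general {A : Type} [Fintype A]
    (σ : A → List A)
    (β : ℂ) (γ : A → ℂ) (hβ : 1 < ‖β‖)
    (a : A) (τ : ℂ) (hτ : ‖τ‖ = 1)
    (C : ℝ) (hC : C = sSup { r : ℝ | ∃ (b : A) (τ' : ℂ),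
      ‖τ'‖ = 1 ∧ r = -IEMWandering.vDir σ β γ b τ' }) :
    ∀ n : ℕ, 1 ≤ n →
      |IEMWandering.vDirN σ β γ n a τ - IEMWandering.vDir σ β γ a τ| ≤
        C * (‖β‖)⁻¹ ^ n := by
  open IEMWandering in
  intro n _
  have : Nonempty A := ⟨a⟩
  obtain rfl : C = vDirConst σ β γ := hC
  rw [vDirN_eq_sInf, vDir_eq_sInf]
  refine abs_sInf_image_sub_sInf_image_le
    (mul_nonneg (vDirConst_nonneg hβ) (by positivity)) ?_
    fun x hx => abs_re_mul_zrepN_sub_re_mul_zrep_le hβ hx hτ n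
  simpa only [Frac_eq_image, Set.image_image] using bddBelow_re_image_Frac hβ a τ

/-- **Lemma 5.6** (exponential approximation). For all `n ≥ 1`,
`|v_a^{(n)}(τ) − v_a(τ)| ≤ C |β|^{−n}`, where
`C = max{−v_b(τ') : b ∈ 𝒜, τ' ∈ S¹} < ∞`. -/
theorem exponential_approximation {A : Type} [Fintype A] [DecidableEq A]
    (σ : A → List A) (hprim : IEMWandering.Primitive σ)
    (β : ℂ) (γ : A → ℂ) (hβ : 1 < ‖β‖)
    (hγ : IEMWandering.IsEigenvector σ β γ)
    (a : A) (τ : ℂ) (hτ : ‖τ‖ = 1)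
    (C : ℝ) (hC : C = sSup { r : ℝ | ∃ (b : A) (τ' : ℂ),
      ‖τ'‖ = 1 ∧ r = -IEMWandering.vDir σ β γ b τ' }) :
    ∀ n : ℕ, 1 ≤ n →
      |IEMWandering.vDirN σ β γ n a τ - IEMWandering.vDir σ β γ a τ| ≤
        C * (‖β‖)⁻¹ ^ n :=
  exponential_approximation_general σ β γ hβ a τ hτ C hC
end
end

section
/- Let β₀ ∈ S¹ and let Ψ ⊆ S¹ be an at most countable set (in the paper, Ψ = ⋃_{a∈𝒜} Ψ_a(Γ) for a fixed eigenvector Γ). Call ξ ∈ S¹ a good direction if for every constant A > 1 and every τ ∈ Ψ, liminf_{n→∞} A^n ⟦τ − β₀^n ξ⟧ > 0. Then almost every ξ ∈ S¹, with respect to the Lebesgue (Haar) measure on S¹, is a good direction. -/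
/-!
Write `ξ = e^{iθ}`. For fixed `τ` and `C > 1`, the arc distance from `τ` to `β₀ⁿ ξ` is the distance
in `ℝ/2πℤ` from `θ` to `arg τ - n arg β₀`, so `θ` is bad only if it lies in infinitely many of the
balls of radius `C⁻ⁿ` around these points. Their measures are summable, so by Borel–Cantelli on
the circle (pulled back to `ℝ` through the fundamental domains `(2πk, 2π(k+1)]`) almost every `θ`
is eventually outside them, and then `Cⁿ ⟦τ - β₀ⁿ ξ⟧ ≥ 1`. Countably many `τ` and the countably
many thresholds `C = 1 + 1/(j+1)` suffice.
-/

open Complex MeasureTheory Filter Set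
open scoped BigOperators

noncomputable section

/-- A good direction for `β₀` relative to the (countable) set of directions `Ψ`. -/
def IEMWandering.GoodDirection (β₀ : ℂ) (Ψ : Set ℂ) (ξ : ℂ) : Prop :=
  ∀ C : ℝ, 1 < C → ∀ τ ∈ Ψ,
    0 < Filter.liminf
      (fun n : ℕ => ((C ^ n * IEMWandering.arcDist τ (β₀ ^ n * ξ) : ℝ) : EReal))
      Filter.atTop

namespace AddCircle

variable {T : ℝ} [Fact (0 < T)]

theorem ae_coe_of_ae {p : AddCircle T → Prop} (h : ∀ᵐ y, p y) : ∀ᵐ t : ℝ, p t := by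
  have hcover : ⋃ k : ℤ, Ioc (k • T) (k • T + T) = univ := by
    simpa [add_smul] using iUnion_Ioc_zsmul (Fact.out : 0 < T)
  rw [← Measure.restrict_univ (μ := (volume : Measure ℝ)), ← hcover, ae_restrict_iUnion_iff]
  exact fun k => (AddCircle.measurePreserving_mk T _).quasiMeasurePreserving.ae h

theorem ae_eventually_le_dist {x : ℕ → AddCircle T} {r : ℕ → ℝ} (hr₀ : ∀ n, 0 ≤ r n)
    (hr : Summable r) : ∀ᵐ y : AddCircle T, ∀ᶠ n in atTop, r n ≤ dist y (x n) := by
  have hball : ∀ n, volume (Metric.ball (x n) (r n)) ≤ ENNReal.ofReal (2 * r n) := fun n =>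
    calc volume (Metric.ball (x n) (r n)) ≤ volume (Metric.closedBall (x n) (r n)) :=
          measure_mono Metric.ball_subset_closedBall
      _ ≤ ENNReal.ofReal (2 * r n) := by
          rw [volume_closedBall]; exact ENNReal.ofReal_le_ofReal (min_le_right _ _)
  have hsum : ∑' n, volume (Metric.ball (x n) (r n)) ≠ ⊤ := by
    refine ne_top_of_le_ne_top ?_ (ENNReal.tsum_le_tsum hball)
    rw [← ENNReal.ofReal_tsum_of_nonneg (fun n => by linarith [hr₀ n]) (hr.mul_left 2)]
    exact ENNReal.ofReal_ne_top
  filter_upwards [ae_eventually_notMem hsum] with y hy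
  filter_upwards [hy] with n hn
  simpa [Metric.mem_ball] using hn

end AddCircle

theorem Complex.arg_exp_mul_I_coe_angle (θ : ℝ) : (arg (exp (θ * I)) : Real.Angle) = θ := by
  have h := arg_cos_add_sin_mul_I_coe_angle θ
  rwa [Real.Angle.cos_coe, Real.Angle.sin_coe, ofReal_cos, ofReal_sin, cos_add_sin_I] at h

theorem Filter.liminf_pow_mul_pos_of_inv_pow_le {c C : ℝ} {d : ℕ → ℝ} (hc : 0 < c) (hcC : c ≤ C)
    (hd : ∀ᶠ n in atTop, (c ^ n)⁻¹ ≤ d n) :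
    0 < liminf (fun n => ((C ^ n * d n : ℝ) : EReal)) atTop := by
  have hge : ∀ᶠ n in atTop, (1 : EReal) ≤ ((C ^ n * d n : ℝ) : EReal) := by
    filter_upwards [hd] with n hn
    have hcn : 0 < c ^ n := pow_pos hc n
    have hC : 0 ≤ C := hc.le.trans hcC
    have : (1 : ℝ) ≤ C ^ n * d n :=
      calc (1 : ℝ) = c ^ n * (c ^ n)⁻¹ := (mul_inv_cancel₀ hcn.ne').symm
        _ ≤ C ^ n * d n := by gcongr
    exact_mod_cast this
  exact zero_lt_one.trans_le (le_liminf_of_le (by isBoundedDefault) hge)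

namespace IEMWandering

theorem arcDist_eq_dist_arg {τ ξ : ℂ} (hτ : τ ≠ 0) (hξ : ξ ≠ 0) :
    arcDist τ ξ = dist (arg τ : Real.Angle) (arg ξ) := by
  have hπ : |arg (τ / ξ)| ≤ |2 * Real.pi| / 2 := by
    rw [abs_of_pos Real.two_pi_pos, mul_div_cancel_left₀ _ two_ne_zero]
    exact abs_arg_le_pi _
  rw [arcDist, dist_eq_norm, ← arg_div_coe_angle hτ hξ]
  exact ((AddCircle.norm_coe_eq_abs_iff _ Real.two_pi_pos.ne').2 hπ).symm

theorem arcDist_pow_mul_exp {β₀ τ : ℂ} (hβ₀ : β₀ ≠ 0) (hτ : τ ≠ 0) (n : ℕ) (θ : ℝ) :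
    arcDist τ (β₀ ^ n * exp (θ * I)) = dist (θ : Real.Angle) (arg τ - n • arg β₀) := by
  rw [arcDist_eq_dist_arg hτ (mul_ne_zero (pow_ne_zero n hβ₀) (exp_ne_zero _)),
    arg_mul_coe_angle (pow_ne_zero n hβ₀) (exp_ne_zero _), arg_pow_coe_angle,
    arg_exp_mul_I_coe_angle, dist_eq_norm, dist_eq_norm, ← norm_neg]
  congr 1
  abel

theorem ae_eventually_le_arcDist {β₀ τ : ℂ} (hβ₀ : β₀ ≠ 0) (hτ : τ ≠ 0) {r : ℕ → ℝ}
    (hr₀ : ∀ n, 0 ≤ r n) (hr : Summable r) :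
    ∀ᵐ θ : ℝ, ∀ᶠ n in atTop, r n ≤ arcDist τ (β₀ ^ n * exp (θ * I)) := by
  have : Fact (0 < 2 * Real.pi) := ⟨Real.two_pi_pos⟩
  simp_rw [arcDist_pow_mul_exp hβ₀ hτ]
  exact AddCircle.ae_coe_of_ae (AddCircle.ae_eventually_le_dist hr₀ hr)

end IEMWandering

/-- **Lemma 6.6.** Let `β₀ ∈ S¹` and let `Ψ ⊆ S¹` be at most countable. Then almost
every direction `ξ ∈ S¹` (with respect to the Haar/arc-length measure on `S¹`, here
parametrized by `ξ = e^{iθ}` with `θ` Lebesgue-random in `ℝ`) is good: for every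
`A > 1` and every `τ ∈ Ψ`, `liminf_{n→∞} Aⁿ ⟦τ − β₀ⁿ ξ⟧ > 0`. -/
theorem almost_every_direction_good (β₀ : ℂ) (hβ₀ : ‖β₀‖ = 1)
    (Ψ : Set ℂ) (hΨsub : Ψ ⊆ {z : ℂ | ‖z‖ = 1})
    (hΨ : Set.Countable Ψ) :
    ∀ᵐ θ : ℝ, IEMWandering.GoodDirection β₀ Ψ (Complex.exp ((θ : ℂ) * Complex.I)) := by
  have hβ₀' : β₀ ≠ 0 := norm_ne_zero_iff.mp (by rw [hβ₀]; exact one_ne_zero)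
  set c : ℕ → ℝ := fun j => 1 + 1 / (j + 1)
  have hc : ∀ j, 1 < c j := fun j => lt_add_of_pos_right 1 (by positivity)
  have hfar : ∀ᵐ θ : ℝ, ∀ j, ∀ τ ∈ Ψ, ∀ᶠ n in atTop,
      (c j ^ n)⁻¹ ≤ IEMWandering.arcDist τ (β₀ ^ n * exp (θ * I)) := by
    refine ae_all_iff.2 fun j => (ae_ball_iff hΨ).2 fun τ hτ => ?_
    have hτ₀ : τ ≠ 0 := norm_ne_zero_iff.mp (by rw [hΨsub hτ]; exact one_ne_zero)
    refine IEMWandering.ae_eventually_le_arcDist hβ₀' hτ₀ (fun n => by positivity) ?_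
    simpa only [← inv_pow] using
      summable_geometric_of_lt_one (by positivity) (inv_lt_one_of_one_lt₀ (hc j))
  filter_upwards [hfar] with θ hθ C hC τ hτ
  obtain ⟨j, hj⟩ := exists_nat_one_div_lt (sub_pos.2 hC)
  exact liminf_pow_mul_pos_of_inv_pow_le (zero_lt_one.trans (hc j)) (by linarith) (hθ j τ hτ)
end
end

section
/- Let M be a square matrix with integer entries having a positive real eigenvalue λ that is a simple root of the characteristic polynomial and satisfies |μ| < λ for every other complex eigenvalue μ of M (as holds for the Perron–Frobenius eigenvalue of a primitive nonnegative integer matrix, and for every power M^n). If β is an eigenvalue of M with the same minimal polynomial over ℚ as λ (i.e. Galois-conjugate with λ), then β is a simple root of the characteristic polynomial of M (so β has algebraic and geometric multiplicity one); moreover, if β is not real, then β/|β| is not a root of unity. -/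
open Complex MeasureTheory Filter Set
open scoped BigOperators

noncomputable section

/-! Rational polynomials are fixed by every embedding of a number field into `ℂ`, so
Galois-conjugate roots of the characteristic polynomial have equal multiplicities, and a simple
root has a one-dimensional eigenspace. If `β` is not real but `βⁿ = β̄ⁿ`, an embedding of
`ℚ(β, β̄)` sending `β` to `λ` sends `β̄` to a root `μ` with `μⁿ = λⁿ`; then `|μ| = λ`, so
`μ = λ` by dominance, and injectivity gives `β̄ = β`. -/

open Polynomial IntermediateField

section Conjugates

variable {F : Type*} [Field F]

theorem rootMultiplicity_map_algHom {E L : Type*} [Field E] [CommRing L] [IsDomain L]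
    [Algebra F E] [Algebra F L] (ψ : E →ₐ[F] L) (p : F[X]) (a : E) :
    (p.map (algebraMap F E)).rootMultiplicity a =
      (p.map (algebraMap F L)).rootMultiplicity (ψ a) := by
  rw [eq_rootMultiplicity_map ψ.toRingHom.injective, Polynomial.map_map]
  congr 2
  exact ψ.comp_algebraMap

section AlgClosed

variable {K : Type*} [Field K] [IsAlgClosed K] [Algebra F K]

theorem exists_algHom_adjoin_apply_eq_of_minpoly_eq {S : Set K} (hS : ∀ s ∈ S, IsIntegral F s)
    {x z : K} (hx : x ∈ adjoin F S) (h : minpoly F x = minpoly F z) :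
    ∃ φ : adjoin F S →ₐ[F] K, φ ⟨x, hx⟩ = z :=
  exists_algHom_adjoin_of_splits_of_aeval (fun s hs ↦ ⟨hS s hs, IsAlgClosed.splits _⟩) hx
    (h ▸ minpoly.aeval F z)

theorem rootMultiplicity_map_eq_of_minpoly_eq (p : F[X]) {x z : K} (hx : IsIntegral F x)
    (h : minpoly F x = minpoly F z) :
    (p.map (algebraMap F K)).rootMultiplicity x =
      (p.map (algebraMap F K)).rootMultiplicity z := by
  have hx' : x ∈ F⟮x⟯ := mem_adjoin_simple_self F x
  obtain ⟨φ, hφ⟩ := exists_algHom_adjoin_apply_eq_of_minpoly_eq (by simpa using hx) hx' h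
  rw [← hφ, ← rootMultiplicity_map_algHom φ]
  exact (rootMultiplicity_map_algHom (F⟮x⟯).val p ⟨x, hx'⟩).symm

end AlgClosed

theorem eq_of_pow_eq_of_minpoly_eq_of_dominant {K : Type*} [NormedField K] [IsAlgClosed K]
    [Algebra F K] {p : F[X]} (hp : p ≠ 0) {x y z : K}
    (hdom : ∀ w : K, aeval w p = 0 → w ≠ z → ‖w‖ < ‖z‖)
    (hx : aeval x p = 0) (hy : aeval y p = 0) (hxz : minpoly F x = minpoly F z)
    {n : ℕ} (hn : n ≠ 0) (hxy : y ^ n = x ^ n) : y = x := by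
  have hint : ∀ s ∈ ({x, y} : Set K), IsIntegral F s := by
    rintro s (rfl | rfl)
    exacts [IsAlgebraic.isIntegral ⟨p, hp, hx⟩, IsAlgebraic.isIntegral ⟨p, hp, hy⟩]
  have hxS : x ∈ adjoin F {x, y} := subset_adjoin F _ (by simp)
  have hyS : y ∈ adjoin F {x, y} := subset_adjoin F _ (by simp)
  obtain ⟨φ, hφ⟩ := exists_algHom_adjoin_apply_eq_of_minpoly_eq hint hxS hxz
  have hφy_root : aeval (φ ⟨y, hyS⟩) p = 0 := by
    have : aeval (⟨y, hyS⟩ : adjoin F {x, y}) p = 0 :=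
      Subtype.ext (by rw [← aeval_coe]; exact hy)
    rw [aeval_algHom_apply, this, map_zero]
  have hφy_pow : φ ⟨y, hyS⟩ ^ n = z ^ n := by
    rw [← hφ, ← map_pow, ← map_pow]
    exact congrArg φ (Subtype.ext hxy)
  have hφy : φ ⟨y, hyS⟩ = z := by
    by_contra hne
    have := pow_lt_pow_left₀ (hdom _ hφy_root hne) (norm_nonneg _) hn
    rw [← norm_pow, ← norm_pow, hφy_pow] at this
    exact this.false
  exact congrArg Subtype.val (φ.toRingHom.injective (hφy.trans hφ.symm))

end Conjugates

theorem Complex.minpoly_conj (β : ℂ) : minpoly ℚ ((starRingEnd ℂ) β) = minpoly ℚ β :=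
  minpoly.algHom_eq (conjAe.toAlgHom.restrictScalars ℚ) conjAe.injective β

theorem IEMWandering.conj_pow_eq_pow_of_unitDir_pow_eq_one {β : ℂ} {n : ℕ}
    (h : IEMWandering.unitDir β ^ n = 1) : (starRingEnd ℂ) β ^ n = β ^ n := by
  have hβ : β ^ n = ((‖β‖ ^ n : ℝ) : ℂ) := by
    rcases eq_or_ne β 0 with rfl | hβ0
    · simp_all [IEMWandering.unitDir]
    · rw [IEMWandering.unitDir, div_pow, div_eq_one_iff_eq (pow_ne_zero _ (by simpa using hβ0))] at h
      rw [h, ofReal_pow]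
  rw [← map_pow, hβ, conj_ofReal]

namespace Matrix

variable {K ι : Type*} [Field K] [Fintype ι] [DecidableEq ι]

theorem charpoly_map_intCast [CharZero K] (M : Matrix ι ι ℤ) :
    (M.map (Int.cast : ℤ → K)).charpoly =
      (M.charpoly.map (Int.castRingHom ℚ)).map (algebraMap ℚ K) := by
  rw [Polynomial.map_map, ← charpoly_map]
  congr
  ext
  simp

theorem exists_mulVec_eq_smul_of_isRoot_charpoly (A : Matrix ι ι K) {μ : K}
    (h : A.charpoly.IsRoot μ) : ∃ v : ι → K, v ≠ 0 ∧ A *ᵥ v = μ • v := by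
  rw [← charpoly_toLin', ← Module.End.hasEigenvalue_iff_isRoot_charpoly] at h
  obtain ⟨v, hv⟩ := h.exists_hasEigenvector
  exact ⟨v, hv.2, hv.apply_eq_smul⟩

theorem exists_smul_eq_of_rootMultiplicity_charpoly_eq_one (A : Matrix ι ι K) {μ : K}
    (h : A.charpoly.rootMultiplicity μ = 1) {v w : ι → K} (hv : A *ᵥ v = μ • v)
    (hw : A *ᵥ w = μ • w) (hv0 : v ≠ 0) : ∃ c : K, w = c • v := by
  set E := Module.End.eigenspace (toLin' A) μ
  have hvE : v ∈ E := Module.End.mem_eigenspace_iff.mpr hv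
  have hwE : w ∈ E := Module.End.mem_eigenspace_iff.mpr hw
  have hE : Module.finrank K E = 1 := by
    refine le_antisymm ?_ ?_
    · simpa [E, charpoly_toLin', h] using LinearMap.finrank_eigenspace_le (toLin' A) μ
    · exact Module.finrank_pos_iff_exists_ne_zero.mpr ⟨⟨v, hvE⟩, by simpa using hv0⟩
  obtain ⟨c, hc⟩ := (finrank_eq_one_iff_of_nonzero' (⟨v, hvE⟩ : E) (by simpa using hv0)).mp hE
    ⟨w, hwE⟩
  exact ⟨c, congrArg Subtype.val hc.symm⟩

end Matrix

theorem galois_conjugate_simple_general {ι : Type} [Fintype ι] [DecidableEq ι]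
    (M : Matrix ι ι ℤ) (lam : ℝ) (β : ℂ)
    (hlam_simple : ((M.map (Int.cast : ℤ → ℂ)).charpoly).rootMultiplicity (lam : ℂ) = 1)
    (hdom : ∀ μ : ℂ, ((M.map (Int.cast : ℤ → ℂ)).charpoly).IsRoot μ →
      μ ≠ (lam : ℂ) → ‖μ‖ < lam)
    (hβ_eig : ((M.map (Int.cast : ℤ → ℂ)).charpoly).IsRoot β)
    (hgal : minpoly ℚ β = minpoly ℚ ((lam : ℂ))) :
    ((M.map (Int.cast : ℤ → ℂ)).charpoly).rootMultiplicity β = 1 ∧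
    (∃ v : ι → ℂ, v ≠ 0 ∧ (M.map (Int.cast : ℤ → ℂ)).mulVec v = β • v) ∧
    (∀ v w : ι → ℂ, (M.map (Int.cast : ℤ → ℂ)).mulVec v = β • v →
      (M.map (Int.cast : ℤ → ℂ)).mulVec w = β • w → v ≠ 0 → ∃ c : ℂ, w = c • v) ∧
    (β.im ≠ 0 → IEMWandering.NotRootOfUnity (IEMWandering.unitDir β)) := by
  set P : ℚ[X] := M.charpoly.map (Int.castRingHom ℚ)
  have hP : P ≠ 0 := ((Matrix.charpoly_monic M).map _).ne_zero
  have hroot (w : ℂ) : ((M.map (Int.cast : ℤ → ℂ)).charpoly).IsRoot w ↔ aeval w P = 0 := by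
    rw [Matrix.charpoly_map_intCast, IsRoot.def, eval_map_algebraMap]
  have hβP : aeval β P = 0 := (hroot β).mp hβ_eig
  have hmult : ((M.map (Int.cast : ℤ → ℂ)).charpoly).rootMultiplicity β = 1 := by
    rw [Matrix.charpoly_map_intCast] at hlam_simple ⊢
    rw [rootMultiplicity_map_eq_of_minpoly_eq P (IsAlgebraic.isIntegral ⟨P, hP, hβP⟩) hgal,
      hlam_simple]
  refine ⟨hmult, Matrix.exists_mulVec_eq_smul_of_isRoot_charpoly _ hβ_eig,
    fun v w hv hw hv0 ↦ Matrix.exists_smul_eq_of_rootMultiplicity_charpoly_eq_one _ hmult hv hw hv0,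
    fun him n hn hpow ↦ him ?_⟩
  have hdom' (w : ℂ) (hw : aeval w P = 0) (hne : w ≠ lam) : ‖w‖ < ‖(lam : ℂ)‖ :=
    (hdom w ((hroot w).mpr hw) hne).trans_le (by simpa using le_abs_self lam)
  have hconjP : aeval ((starRingEnd ℂ) β) P = 0 :=
    aeval_eq_zero_of_dvd_aeval_eq_zero (minpoly.dvd ℚ β hβP)
      (Complex.minpoly_conj β ▸ minpoly.aeval ℚ _)
  exact conj_eq_iff_im.mp (eq_of_pow_eq_of_minpoly_eq_of_dominant hP hdom' hβP hconjP hgal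
    hn.ne' (IEMWandering.conj_pow_eq_pow_of_unitDir_pow_eq_one hpow))

/-- **Lemma 7.3** (algebraic content). Let `M` be an integer matrix with a positive
real eigenvalue `λ` that is a simple root of the characteristic polynomial and
strictly dominates all other eigenvalues in modulus. If `β` is an eigenvalue of `M`
Galois-conjugate with `λ` (same minimal polynomial over `ℚ`), then `β` is a simple
root of the characteristic polynomial, its eigenspace is one-dimensional, and if `β`
is not real then `β/|β|` is not a root of unity. -/
theorem galois_conjugate_simple {ι : Type} [Fintype ι] [DecidableEq ι]
    (M : Matrix ι ι ℤ) (lam : ℝ) (β : ℂ)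
    (hlam_pos : 0 < lam)
    (hlam_root : ((M.map (Int.cast : ℤ → ℂ)).charpoly).IsRoot (lam : ℂ))
    (hlam_simple : ((M.map (Int.cast : ℤ → ℂ)).charpoly).rootMultiplicity (lam : ℂ) = 1)
    (hdom : ∀ μ : ℂ, ((M.map (Int.cast : ℤ → ℂ)).charpoly).IsRoot μ →
      μ ≠ (lam : ℂ) → ‖μ‖ < lam)
    (hβ_eig : ((M.map (Int.cast : ℤ → ℂ)).charpoly).IsRoot β)
    (hgal : minpoly ℚ β = minpoly ℚ ((lam : ℂ))) :
    ((M.map (Int.cast : ℤ → ℂ)).charpoly).rootMultiplicity β = 1 ∧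
    (∃ v : ι → ℂ, v ≠ 0 ∧ (M.map (Int.cast : ℤ → ℂ)).mulVec v = β • v) ∧
    (∀ v w : ι → ℂ, (M.map (Int.cast : ℤ → ℂ)).mulVec v = β • v →
      (M.map (Int.cast : ℤ → ℂ)).mulVec w = β • w → v ≠ 0 → ∃ c : ℂ, w = c • v) ∧
    (β.im ≠ 0 → IEMWandering.NotRootOfUnity (IEMWandering.unitDir β)) :=
  galois_conjugate_simple_general M lam β hlam_simple hdom hβ_eig hgal
end
end
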